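/- arXiv:1004.3146 — 4 statements merged into one kernel-verified Lean document; each statement's English description precedes it below -/
import Mathlib

section
/- For any real numbers a, b, c with a + b + c = 0, the matrix R(a,b,c) with rows (1, cos c, cos b), (cos c, 1, cos a), (cos b, cos a, 1) is positive semidefinite. -/
open Real Matrix

theorem posSemidef_cos_sub {ι : Type*} [Fintype ι] (θ : ι → ℝ) :
    (of fun i j => cos (θ i - θ j)).PosSemidef := by
  let B : Matrix (Fin 2) ι ℝ := of ![cos ∘ θ, sin ∘ θ]
  have hgram : (of fun i j => cos (θ i - θ j)) = Bᴴ * B := by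
    ext i j
    simp [B, mul_apply, Fin.sum_univ_two, cos_sub]
  exact hgram ▸ posSemidef_conjTranspose_mul_self B

theorem stmt_2 (a b c : ℝ) (h : a + b + c = 0) :
    (!![1, Real.cos c, Real.cos b; Real.cos c, 1, Real.cos a;
        Real.cos b, Real.cos a, 1] : Matrix (Fin 3) (Fin 3) ℝ).PosSemidef := by
  have hcos_a : cos (b + c) = cos a := by
    rw [show b + c = -a by linarith, cos_neg]
  -- Gram matrix of the unit vectors at angles `b`, `b + c`, `0`, using `b + c = -a`.
  convert posSemidef_cos_sub ![b, b + c, 0] using 1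
  ext i j
  fin_cases i <;> fin_cases j <;> simp [hcos_a, -neg_add_rev]
end

section
/- The matrix R(a,b,c) with rows (1, cos c, cos b), (cos c, 1, cos a), (cos b, cos a, 1), where a + b + c = 0, has rank 2 if and only if (sin a, sin b, sin c) ≠ (0,0,0). -/
/-!
`R(a,b,c)` is the Gram matrix `Vᵀ V` of the unit vectors at angles `0, c, -b`, where `V` is the
`2 × 3` matrix of their coordinates; hence `rank R = rank V = rank (V Vᵀ)`. By Lagrange's identity
`det (V Vᵀ)` is the sum of the squares of the `2 × 2` minors of `V`, which are `sin` of the angle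
differences, i.e. `± sin a, ± sin b, ± sin c`.
-/

open Matrix Real

theorem Matrix.rank_eq_card_iff_det_ne_zero {n K : Type*} [Fintype n] [DecidableEq n] [Field K]
    (A : Matrix n n K) : A.rank = Fintype.card n ↔ A.det ≠ 0 := by
  refine ⟨fun h => ?_, rank_of_det_ne_zero⟩
  have hrange : LinearMap.range A.mulVecLin = ⊤ :=
    Submodule.eq_top_of_finrank_eq (by rw [← rank, h, Module.finrank_fintype_fun_eq_card])
  have hunit : IsUnit A := mulVec_surjective_iff_isUnit.mp (LinearMap.range_eq_top.mp hrange)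
  exact ((isUnit_iff_isUnit_det A).mp hunit).ne_zero

theorem Finset.sum_sum_mul_sub_mul_sq {ι R : Type*} [Fintype ι] [CommRing R] (x y : ι → R) :
    ∑ i, ∑ j, (x i * y j - x j * y i) ^ 2 =
      2 * ((∑ i, x i ^ 2) * ∑ i, y i ^ 2 - (∑ i, x i * y i) ^ 2) := by
  have inner : ∀ i, ∑ j, (x i * y j - x j * y i) ^ 2 =
      x i ^ 2 * ∑ j, y j ^ 2 - 2 * (x i * y i) * ∑ j, x j * y j + y i ^ 2 * ∑ j, x j ^ 2 := by
    intro i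
    simp only [Finset.mul_sum, ← Finset.sum_sub_distrib, ← Finset.sum_add_distrib]
    exact Finset.sum_congr rfl fun j _ => by ring
  simp only [inner, Finset.sum_add_distrib, Finset.sum_sub_distrib, ← Finset.sum_mul,
    ← Finset.mul_sum]
  ring

theorem Matrix.rank_eq_two_iff_exists_minor_ne_zero {ι : Type*} [Fintype ι]
    (V : Matrix (Fin 2) ι ℝ) :
    V.rank = 2 ↔ ∃ i j, V 0 i * V 1 j - V 0 j * V 1 i ≠ 0 := by
  have hdet : (V * Vᵀ).det = (∑ i, ∑ j, (V 0 i * V 1 j - V 0 j * V 1 i) ^ 2) / 2 := by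
    rw [Finset.sum_sum_mul_sub_mul_sq, det_fin_two]
    simp only [mul_apply, transpose_apply, mul_comm (V 1 _) (V 0 _), ← sq]
    ring
  have hrank := rank_eq_card_iff_det_ne_zero (V * Vᵀ)
  rw [rank_self_mul_transpose, Fintype.card_fin, hdet] at hrank
  rw [hrank]
  simp [Finset.sum_eq_zero_iff_of_nonneg, Finset.sum_nonneg, sq_nonneg]

theorem rank_cos_sub_eq_two_iff {ι : Type*} [Fintype ι] (θ : ι → ℝ) :
    (of fun i j => cos (θ i - θ j)).rank = 2 ↔ ∃ i j, sin (θ j - θ i) ≠ 0 := by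
  let V : Matrix (Fin 2) ι ℝ := of ![fun i => cos (θ i), fun i => sin (θ i)]
  have hgram : (of fun i j => cos (θ i - θ j)) = Vᵀ * V := by
    ext i j
    simp [V, mul_apply, Fin.sum_univ_two, cos_sub]
  rw [hgram, rank_transpose_mul_self, rank_eq_two_iff_exists_minor_ne_zero]
  simp [V, sin_sub, mul_comm]

theorem stmt_3 (a b c : ℝ) (h : a + b + c = 0) :
    (!![1, Real.cos c, Real.cos b; Real.cos c, 1, Real.cos a;
        Real.cos b, Real.cos a, 1] : Matrix (Fin 3) (Fin 3) ℝ).rank = 2 ↔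
      ¬(Real.sin a = 0 ∧ Real.sin b = 0 ∧ Real.sin c = 0) := by
  have hcb : c + b = -a := by linarith
  have hbc : -b - c = a := by linarith
  have hgram : !![1, cos c, cos b; cos c, 1, cos a; cos b, cos a, 1] =
      of fun i j => cos (![0, c, -b] i - ![0, c, -b] j) := by
    ext i j
    fin_cases i <;> fin_cases j <;> simp [hcb, hbc]
  rw [hgram, rank_cos_sub_eq_two_iff]
  simp only [Nat.succ_eq_add_one, Nat.reduceAdd, ne_eq, Fin.exists_fin_succ, Fin.isValue,
    cons_val_zero, zero_sub, sin_neg, neg_eq_zero, cons_val_succ, cons_val_fin_one, exists_const,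
    sin_zero, not_true_eq_false, sub_zero, false_or, sub_self, hbc, sub_neg_eq_add, hcb, or_false,
    not_and_or]
  tauto
end

section
/- Suppose x, y, z satisfy x² + y² - 2xy·cos c = sin²c and x·sin a + y·sin b + z·sin c = 0, where a + b + c = 0 and sin c ≠ 0. Then |z| ≤ 1. -/
/-! The linear form `x sin a + y sin b` is one coordinate of a vector whose squared length is
`x² + y² - 2xy cos (a + b)`, and `cos (a + b) = cos c`. Hence `(z sin c)² ≤ sin² c`. -/

open Real

theorem sq_mul_sin_add_sq_mul_cos_eq (a b x y : ℝ) :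
    (x * sin a + y * sin b) ^ 2 + (x * cos a - y * cos b) ^ 2
      = x ^ 2 + y ^ 2 - 2 * x * y * cos (a + b) := by
  rw [cos_add]
  linear_combination x ^ 2 * sin_sq_add_cos_sq a + y ^ 2 * sin_sq_add_cos_sq b

theorem sq_mul_sin_add_mul_sin_le (a b x y : ℝ) :
    (x * sin a + y * sin b) ^ 2 ≤ x ^ 2 + y ^ 2 - 2 * x * y * cos (a + b) := by
  rw [← sq_mul_sin_add_sq_mul_cos_eq]
  exact le_add_of_nonneg_right (sq_nonneg _)

theorem stmt_10 (a b c x y z : ℝ) (habc : a + b + c = 0) (hc : sin c ≠ 0)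
    (h1 : x ^ 2 + y ^ 2 - 2 * x * y * cos c = sin c ^ 2)
    (h2 : x * sin a + y * sin b + z * sin c = 0) :
    |z| ≤ 1 := by
  have hcos : cos (a + b) = cos c := by rw [show a + b = -c by linarith, cos_neg]
  have hz : (z * sin c) ^ 2 ≤ sin c ^ 2 := by
    rw [show z * sin c = -(x * sin a + y * sin b) by linarith, neg_sq, ← h1, ← hcos]
    exact sq_mul_sin_add_mul_sin_le a b x y
  rw [mul_pow] at hz
  rw [← sq_le_one_iff_abs_le_one]
  exact le_of_mul_le_mul_right (by rwa [one_mul]) (by positivity)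
end

section
/- There is no 3-dimensional centered Gaussian vector (X,Y,Z) with unit variances such that the correlation matrix of (Φ(X), Φ(Y), Φ(Z)) has all off-diagonal entries equal to -1/2. Specifically: if the Gaussian correlations are p, q, r, then the copula correlations are g(p), g(q), g(r) with g(r) = 3 - (6/π)arccos(r/2) = (6/π)arcsin(r/2), and the equations g(p) = g(q) = g(r) = -1/2 force p = q = r = 2·sin(-π/12) < -1/2, making the Gaussian correlation matrix fail positive semidefiniteness since det = (1-p)²(1+2p) < 0. -/
/-!
Each equation `3 - (6/π) arccos (x/2) = -1/2` says `arcsin (x/2) = -π/12`, so all three Gaussian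
correlations equal `2 sin (-π/12)`, which is below `-1/2` because `sin² (π/12) = (2 - √3)/4 > 1/16`.
Testing the correlation matrix against `(1, 1, 1)` shows positive semidefiniteness forces
`p + q + r ≥ -3/2`, a contradiction.
-/

open Real

theorem three_sub_mul_arccos_half_eq_neg_half_iff {r : ℝ} :
    3 - (6 / π) * arccos (r / 2) = -(1 / 2) ↔ r = 2 * sin (-(π / 12)) := by
  have hπ : π ≠ 0 := pi_ne_zero
  have h_arcsin : 3 - (6 / π) * arccos (r / 2) = -(1 / 2) ↔ arcsin (r / 2) = -(π / 12) := by
    rw [arccos_eq_pi_div_two_sub_arcsin]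
    constructor <;> intro h <;> field_simp at h ⊢ <;> linarith
  have h_range : -(π / 12) ∈ Set.Ioo (-(π / 2)) (π / 2) := by
    constructor <;> linarith [pi_pos]
  rw [h_arcsin, arcsin_eq_iff_eq_sin h_range]
  constructor <;> intro h <;> linarith

theorem one_fourth_lt_sin_pi_div_twelve : 1 / 4 < sin (π / 12) := by
  have h_sq : sin (π / 12) ^ 2 = (2 - √3) / 4 := by
    rw [sin_sq_eq_half_sub, show 2 * (π / 12) = π / 6 by ring, cos_pi_div_six]
    ring
  have h_sqrt : √3 < 7 / 4 := by
    rw [sqrt_lt' (by norm_num)]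
    norm_num
  have h_pos : 0 < sin (π / 12) := sin_pos_of_pos_of_lt_pi (by positivity) (by linarith [pi_pos])
  nlinarith

theorem two_mul_sin_neg_pi_div_twelve_lt : 2 * sin (-(π / 12)) < -(1 / 2) := by
  rw [sin_neg]
  linarith [one_fourth_lt_sin_pi_div_twelve]

theorem neg_three_halves_le_add_of_posSemidef {p q r : ℝ}
    (h : (!![1, r, q; r, 1, p; q, p, 1] : Matrix (Fin 3) (Fin 3) ℝ).PosSemidef) :
    -(3 / 2) ≤ p + q + r := by
  have h_ones := (Matrix.posSemidef_iff_dotProduct_mulVec.1 h).2 ![1, 1, 1]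
  simp [dotProduct, Matrix.mulVec, Fin.sum_univ_three] at h_ones
  linarith

theorem stmt_19 :
    ¬ ∃ p q r : ℝ,
      (!![1, r, q; r, 1, p; q, p, 1] : Matrix (Fin 3) (Fin 3) ℝ).PosSemidef ∧
        3 - (6 / π) * arccos (p / 2) = -(1 / 2) ∧
        3 - (6 / π) * arccos (q / 2) = -(1 / 2) ∧
        3 - (6 / π) * arccos (r / 2) = -(1 / 2) := by
  rintro ⟨p, q, r, hpsd, hp, hq, hr⟩
  rw [three_sub_mul_arccos_half_eq_neg_half_iff] at hp hq hr
  have := neg_three_halves_le_add_of_posSemidef hpsd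
  linarith [two_mul_sin_neg_pi_div_twelve_lt]
end
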